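/- For all integers d ≥ 1 and k ≥ 1, the inequality C((d+1)(k+1)−1, d) + d ≤ (d+1)·C(d(k+1), d) holds, where C denotes the binomial coefficient. -/

import Mathlib

open scoped BigOperators ENNReal

/-- An abstract simplicial complex on vertex type `V`: a downward-closed set of finsets. -/
structure Cx (V : Type*) where
  faces : Set (Finset V)
  down : ∀ ⦃s t : Finset V⦄, s ∈ faces → t ⊆ s → t ∈ faces

namespace Cx

variable {V : Type*}

/-- `fcount K i` is the number of `i`-dimensional faces of `K`. -/
noncomputable def fcount (K : Cx V) (i : ℕ) : ℕ :=
  Nat.card {s : Finset V // s ∈ K.faces ∧ s.card = i + 1}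

/-- Induced subcomplex on a vertex subset `S`. -/
def induced (K : Cx V) (S : Finset V) : Cx V :=
  ⟨{s | s ∈ K.faces ∧ s ⊆ S}, fun s t hs hts => ⟨K.down hs.1 hts, hts.trans hs.2⟩⟩

/-- The `d`-skeleton of a complex. -/
def skel (K : Cx V) (d : ℕ) : Cx V :=
  ⟨{s | s ∈ K.faces ∧ s.card ≤ d + 1}, fun s t hs hts =>
    ⟨K.down hs.1 hts, le_trans (Finset.card_le_card hts) hs.2⟩⟩

/-- Number of vertices of a complex. -/
noncomputable def vertCount (K : Cx V) : ℕ := Nat.card {v : V // {v} ∈ K.faces}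

/-- The link of a vertex. -/
def linkCx [DecidableEq V] (K : Cx V) (v : V) : Cx V :=
  ⟨{τ | v ∉ τ ∧ insert v τ ∈ K.faces},
   fun s t hs hts => ⟨fun h => hs.1 (hts h), K.down hs.2 (Finset.insert_subset_insert v hts)⟩⟩

end Cx

/-- The `(k+1)`-fold join `∂Δ_{d+1} * ⋯ * ∂Δ_{d+1}` of boundaries of `d`-simplices:
a set of vertices is a face iff it misses at least one vertex of each join factor. -/
def Kjoin (d k : ℕ) : Cx (Fin (k+1) × Fin (d+1)) :=
  ⟨{s | ∀ m : Fin (k+1), ∃ i : Fin (d+1), (m, i) ∉ s},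
   fun s t hs hts m => (hs m).imp fun _ hi h => hi (hts h)⟩

/-- The `d`-clique complex of `K`: faces are all vertex sets all of whose
`(d+1)`-subsets are faces of `K`. -/
def cliqueCx (d : ℕ) (K : Cx V) : Cx V :=
  ⟨{s | ∀ t ⊆ s, t.card = d + 1 → t ∈ K.faces},
   fun s t hs hts u hut hu => hs u (hut.trans hts) hu⟩

section Chains

variable {V : Type*} [LinearOrder V]

/-- Simplicial boundary operator (with the augmentation convention: the boundary of a
vertex is the empty set with coefficient 1, so cycles compute *reduced* homology). -/
noncomputable def bdry (γ : Finset V →₀ ℤ) : Finset V →₀ ℤ :=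
  γ.sum fun s c => ∑ v ∈ s, Finsupp.single (s.erase v)
    (c * (-1) ^ ((s.sort (· ≤ ·)).idxOf v))

/-- `γ` is a `k`-chain of the complex `K`. -/
def IsChainOf (K : Cx V) (k : ℕ) (γ : Finset V →₀ ℤ) : Prop :=
  ∀ s ∈ γ.support, s ∈ K.faces ∧ s.card = k + 1

/-- `γ` is a (reduced) `k`-cycle of `K`. -/
def IsCycleOf (K : Cx V) (k : ℕ) (γ : Finset V →₀ ℤ) : Prop :=
  IsChainOf K k γ ∧ bdry γ = 0

/-- `γ` is a `k`-boundary in `K`. -/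
def IsBoundaryOf (K : Cx V) (k : ℕ) (γ : Finset V →₀ ℤ) : Prop :=
  ∃ β, IsChainOf K (k+1) β ∧ bdry β = γ

/-- `γ` is a nontrivial `k`-cycle: it represents a nonzero class in reduced homology
`H̃ₖ(K; ℤ)`. -/
def IsNontrivialCycle (K : Cx V) (k : ℕ) (γ : Finset V →₀ ℤ) : Prop :=
  IsCycleOf K k γ ∧ ¬ IsBoundaryOf K k γ

/-- The vertex support of a chain. -/
def vsupp (γ : Finset V →₀ ℤ) : Finset V := γ.support.biUnion id

/-- The restriction `γ ∩ link(v)` of a chain to the link of a vertex `v`: a `(k-1)`-face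
`τ` gets the (signed) coefficient of `τ ∪ {v}` in `γ`. -/
noncomputable def restrictLink (v : V) (γ : Finset V →₀ ℤ) : Finset V →₀ ℤ :=
  γ.sum fun s c => if v ∈ s then
    Finsupp.single (s.erase v) (c * (-1) ^ ((s.sort (· ≤ ·)).idxOf v)) else 0

end Chains

section Topology

open Classical in
/-- The geometric realization of a complex on a finite vertex set, as a subset of `V → ℝ`. -/
noncomputable def realizationSet {V : Type*} [Fintype V] (K : Cx V) : Set (V → ℝ) :=
  {f | (∀ v, 0 ≤ f v) ∧ (∑ v, f v) = 1 ∧ (Finset.univ.filter fun v => f v ≠ 0) ∈ K.faces}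

/-- `K` is `k`-connected: every continuous map from a sphere `S^i`, `i ≤ k`, to the
geometric realization of `K` is nullhomotopic. -/
def KConn {V : Type*} [Fintype V] (K : Cx V) (k : ℕ) : Prop :=
  ∀ i ≤ k, ∀ f : C(Metric.sphere (0 : EuclideanSpace ℝ (Fin (i+1))) 1, realizationSet K),
    ∃ y, ContinuousMap.Homotopic f (ContinuousMap.const _ y)

end Topology

section Domination

variable {V : Type*} [DecidableEq V]

/-- `s̃p_K(A)`: the set of vertices `v` for which some face `σ ⊆ A` satisfies
`σ ∪ {v} ∉ K`. -/
def spTilde (K : Cx V) (A : Finset V) : Set V :=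
  {v | ∃ σ : Finset V, σ ∈ K.faces ∧ σ ⊆ A ∧ insert v σ ∉ K.faces}

/-- `A` is a strong dominating set of `K`. -/
def IsStrongDom (K : Cx V) (A : Finset V) : Prop := ∀ v : V, v ∈ spTilde K A

/-- The strong domination number `γ̃(K)` (`⊤` if there is no strong dominating set). -/
noncomputable def gammaTilde (K : Cx V) : ℕ∞ :=
  sInf {n : ℕ∞ | ∃ A : Finset V, IsStrongDom K A ∧ (A.card : ℕ∞) = n}

end Domination

section StrongConn

variable {V : Type*} [DecidableEq V]

/-- A facet: a maximal face. -/
def IsFacet (K : Cx V) (s : Finset V) : Prop :=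
  s ∈ K.faces ∧ ∀ t ∈ K.faces, s ⊆ t → t = s

/-- `K` is a strongly connected `k`-dimensional complex: pure of dimension `k` and any
two facets are joined by a chain of facets, consecutive ones sharing a `(k-1)`-face. -/
def StronglyConnected (K : Cx V) (k : ℕ) : Prop :=
  (∃ s, s ∈ K.faces ∧ s.card = k + 1) ∧
  (∀ s, IsFacet K s → s.card = k + 1) ∧
  ∀ s t, IsFacet K s → IsFacet K t →
    Relation.ReflTransGen (fun a b => IsFacet K a ∧ IsFacet K b ∧ (a ∩ b).card = k) s t

end StrongConn

section Random

open MeasureTheory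

/-- Bernoulli measure on `Bool` with parameter `p` (truncated at 1). -/
noncomputable def bern (p : ℝ≥0∞) : Measure Bool :=
  (PMF.ofFintype (fun b => cond b (min p 1) (1 - min p 1))
    (by rw [Fintype.sum_bool]; exact add_tsub_cancel_of_le (min_le_right p 1))).toMeasure

instance (p : ℝ≥0∞) : IsProbabilityMeasure (bern p) := by
  unfold bern; infer_instance

/-- Sample space for the random complex `G_d(n,p)`: a coin for each potential `d`-face. -/
abbrev RandOmega (d n : ℕ) := {s : Finset (Fin n) // s.card = d + 1} → Bool

/-- The law of `G_d(n,p)`: independent Bernoulli(p) coins for the `d`-faces. -/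
noncomputable def randMeasure (d n : ℕ) (p : ℝ≥0∞) : Measure (RandOmega d n) :=
  Measure.pi fun _ => bern p

/-- The random `d`-complex `G_d(n,p)` determined by the sample `ω`: full
`(d-1)`-skeleton, and the `d`-faces chosen by `ω`. -/
def randCx (d n : ℕ) (ω : RandOmega d n) : Cx (Fin n) :=
  ⟨{s | s.card ≤ d ∨ ∃ h : s.card = d + 1, ω ⟨s, h⟩ = true}, by
    rintro s t hs hts
    rcases hs with h | ⟨h, hω⟩
    · exact Or.inl (le_trans (Finset.card_le_card hts) h)
    · have hle := Finset.card_le_card hts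
      rcases eq_or_lt_of_le hle with heq | hlt
      · have : t = s := Finset.eq_of_subset_of_card_le hts (le_of_eq heq.symm)
        subst this; exact Or.inr ⟨h, hω⟩
      · exact Or.inl (by omega)⟩

end Random
section StmtTwoProof
open Finset


lemma mul_choose_le_choose_succ {n r k : ℕ} (h : k * (r + 1) ≤ n - r) :
    k * n.choose r ≤ n.choose (r + 1) := by
  have key : k * n.choose r * (r + 1) ≤ n.choose (r + 1) * (r + 1) := by
    rw [Nat.choose_succ_right_eq]
    calc k * n.choose r * (r + 1) = n.choose r * (k * (r + 1)) := by ring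
    _ ≤ n.choose r * (n - r) := Nat.mul_le_mul_left _ h
  exact Nat.le_of_mul_le_mul_right key (Nat.succ_pos r)

lemma powA (d k : ℕ) (j : ℕ) (hj : j ≤ d) :
    k ^ j * (d * (k + 1)).choose (d - j) ≤ (d * (k + 1)).choose d := by
  induction j with
  | zero => simp
  | succ j ih =>
    have hj' : j ≤ d := Nat.le_of_succ_le hj
    refine le_trans ?_ (ih hj')
    have hr : d - j = (d - (j + 1)) + 1 := by omega
    rw [pow_succ, hr]
    have h : k * ((d - (j+1)) + 1) ≤ d * (k + 1) - (d - (j + 1)) := by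
      have h1 : d - (j+1) + 1 ≤ d := by omega
      have h2 : d - (j+1) ≤ d := by omega
      have h3 : d * (k+1) = k * d + d := by ring
      calc k * ((d - (j+1)) + 1) ≤ k * d := Nat.mul_le_mul_left _ h1
      _ ≤ d * (k+1) - d := by omega
      _ ≤ d * (k+1) - (d - (j+1)) := Nat.sub_le_sub_left h2 _
    calc k ^ j * k * (d * (k + 1)).choose (d - (j + 1))
        = k ^ j * (k * (d * (k + 1)).choose (d - (j + 1))) := by ring
      _ ≤ k ^ j * (d * (k + 1)).choose ((d - (j+1)) + 1) :=
          Nat.mul_le_mul_left _ (mul_choose_le_choose_succ h)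

lemma sum_descFactorial_le (d : ℕ) (hd : 2 ≤ d) :
    ∑ i ∈ range (d + 1), d.descFactorial i ≤ 3 * d.factorial - 1 := by
  induction d with
  | zero => omega
  | succ d ih =>
    rcases Nat.lt_or_ge d 2 with h | h
    · interval_cases d
      · omega
      · decide
    · have ihd := ih h
      have key : ∑ i ∈ range (d + 2), (d+1).descFactorial i
          = 1 + (d + 1) * ∑ i ∈ range (d + 1), d.descFactorial i := by
        rw [Finset.sum_range_succ']
        simp only [Nat.succ_descFactorial_succ, Nat.descFactorial_zero]
        rw [← Finset.mul_sum]
        omega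
      rw [key]
      have hfac : 1 ≤ d.factorial := Nat.one_le_iff_ne_zero.mpr (Nat.factorial_ne_zero d)
      have h2 : (d+1) * ∑ i ∈ range (d + 1), d.descFactorial i
          ≤ 3 * ((d+1) * d.factorial) - (d+1) := by
        calc (d+1) * ∑ i ∈ range (d + 1), d.descFactorial i
            ≤ (d+1) * (3 * d.factorial - 1) := Nat.mul_le_mul_left _ ihd
          _ = 3 * ((d+1) * d.factorial) - (d+1) := by
              rw [Nat.mul_sub, Nat.mul_one, Nat.mul_left_comm]
      have hfs : (d+1).factorial = (d+1) * d.factorial := rfl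
      rw [hfs]
      have hfac2 : 3 ≤ (d+1) * d.factorial := by
        calc 3 ≤ (d+1) * 1 := by omega
        _ ≤ (d+1) * d.factorial := Nat.mul_le_mul_left _ hfac
      omega

lemma keyB (d k : ℕ) :
    d.factorial * (d * (k+1) + k).choose d
      ≤ (d * (k+1)).choose d * ∑ i ∈ range (d + 1), d.descFactorial i := by
  set n := d * (k + 1) with hn
  have vdm : (n + k).choose d = ∑ j ∈ range (d+1), k.choose j * n.choose (d - j) := by
    rw [Nat.add_comm n k, Nat.add_choose_eq,
      Finset.Nat.sum_antidiagonal_eq_sum_range_succ_mk]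
  rw [vdm, Finset.mul_sum]
  have hstep : ∀ j ∈ range (d+1),
      d.factorial * (k.choose j * n.choose (d - j))
        ≤ d.descFactorial (d - j) * n.choose d := by
    intro j hj
    have hjd : j ≤ d := by simpa using Nat.lt_succ_iff.mp (Finset.mem_range.mp hj)
    have hfd : d.factorial = Nat.factorial j * d.descFactorial (d - j) := by
      have := Nat.factorial_mul_descFactorial (n := d) (k := d - j) (by omega)
      rw [show d - (d - j) = j by omega] at this
      linarith [this]
    calc d.factorial * (k.choose j * n.choose (d - j))
        = d.descFactorial (d - j) * ((Nat.factorial j * k.choose j) * n.choose (d - j)) := by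
          rw [hfd]; ring
      _ = d.descFactorial (d - j) * (k.descFactorial j * n.choose (d - j)) := by
          rw [Nat.descFactorial_eq_factorial_mul_choose k j]
      _ ≤ d.descFactorial (d - j) * (k ^ j * n.choose (d - j)) := by
          exact Nat.mul_le_mul_left _ (Nat.mul_le_mul_right _ (Nat.descFactorial_le_pow k j))
      _ ≤ d.descFactorial (d - j) * n.choose d :=
          Nat.mul_le_mul_left _ (powA d k j hjd)
  calc ∑ j ∈ range (d+1), d.factorial * (k.choose j * n.choose (d - j))
      ≤ ∑ j ∈ range (d+1), d.descFactorial (d - j) * n.choose d := Finset.sum_le_sum hstep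
    _ = (∑ j ∈ range (d+1), d.descFactorial (d - j)) * n.choose d := by
        rw [Finset.sum_mul]
    _ = (∑ i ∈ range (d+1), d.descFactorial i) * n.choose d := by
        congr 1
        have hr := Finset.sum_range_reflect (fun i => d.descFactorial i) (d+1)
        simp only [Nat.add_sub_cancel] at hr
        exact hr
    _ = n.choose d * ∑ i ∈ range (d + 1), d.descFactorial i := Nat.mul_comm _ _

/-- For all `d ≥ 1`, `k ≥ 1`:
`C((d+1)(k+1)−1, d) + d ≤ (d+1)·C(d(k+1), d)`. -/
theorem stmt2 (d k : ℕ) (hd : 1 ≤ d) (hk : 1 ≤ k) :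
    ((d+1)*(k+1) - 1).choose d + d ≤ (d+1) * (d*(k+1)).choose d := by
  have hm : (d+1)*(k+1) - 1 = d*(k+1) + k := by ring_nf; omega
  rw [hm]
  set n := d * (k + 1) with hn
  rcases Nat.lt_or_ge d 3 with hsmall | hbig
  · interval_cases d
    · -- d = 1
      simp [Nat.choose_one_right, hn]
      omega
    · -- d = 2
      have h2 : ∀ m : ℕ, 2 * ((m+1).choose 2) = (m+1) * m := by
        intro m
        induction m with
        | zero => decide
        | succ m ih =>
          rw [show m+1+1 = (m+1)+1 from rfl, Nat.choose_succ_succ,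
            Nat.choose_one_right]
          ring_nf
          ring_nf at ih
          omega
      have e1 : n + k = 3*k + 2 := by simp [hn]; ring
      have e2 : n = 2*k + 2 := by simp [hn]; ring
      have c1 := h2 (3*k+1)
      have c2 := h2 (2*k+1)
      have e1' : (3*k+1)+1 = n + k := by omega
      have e2' : (2*k+1)+1 = n := by omega
      rw [e1'] at c1
      rw [e2'] at c2
      nlinarith [c1, c2]
  · -- d ≥ 3
    have hB := keyB d k
    have hS := sum_descFactorial_le d (by omega)
    have hfac : 1 ≤ d.factorial := Nat.one_le_iff_ne_zero.mpr (Nat.factorial_ne_zero d)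
    have hCd : d.factorial * (n + k).choose d ≤ n.choose d * (3 * d.factorial) := by
      calc d.factorial * (n + k).choose d
          ≤ n.choose d * ∑ i ∈ range (d + 1), d.descFactorial i := hB
        _ ≤ n.choose d * (3 * d.factorial) := Nat.mul_le_mul_left _ (le_trans hS (by omega))
    -- so C(n+k,d) ≤ 3 C(n,d)
    have h3 : (n + k).choose d ≤ 3 * n.choose d := by
      have : d.factorial * (n + k).choose d ≤ d.factorial * (3 * n.choose d) := by
        calc d.factorial * (n + k).choose d ≤ n.choose d * (3 * d.factorial) := hCd
        _ = d.factorial * (3 * n.choose d) := by ring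
      exact Nat.le_of_mul_le_mul_left this (by omega)
    -- C(n,d) ≥ n ≥ 2d ≥ d
    have hCn : n ≤ n.choose d := by
      have := powA d k (d - 1) (by omega)
      rw [show d - (d-1) = 1 by omega, Nat.choose_one_right] at this
      have hk1 : 1 ≤ k ^ (d-1) := Nat.one_le_pow _ _ hk
      calc n = 1 * n := (Nat.one_mul n).symm
      _ ≤ k ^ (d-1) * n := Nat.mul_le_mul_right _ hk1
      _ ≤ n.choose d := this
    have hnd : d ≤ n := by
      rw [hn]
      calc d = d * 1 := (Nat.mul_one d).symm
      _ ≤ d * (k+1) := Nat.mul_le_mul_left _ (by omega)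
    have : d ≤ (d - 2) * n.choose d := by
      calc d ≤ n.choose d := le_trans hnd hCn
      _ = 1 * n.choose d := (Nat.one_mul _).symm
      _ ≤ (d - 2) * n.choose d := Nat.mul_le_mul_right _ (by omega)
    have hd2 : (d+1) * n.choose d = 3 * n.choose d + (d - 2) * n.choose d := by
      have : d + 1 = 3 + (d - 2) := by omega
      rw [this, Nat.add_mul]
    omega

end StmtTwoProof
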